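/- Let y: [0, ∞) → [0, ∞) be a C¹ function satisfying y'(t) + c₃ y(t)^p ≤ c₂ for all t > 0, where c₂, c₃ > 0 and p > 1. Then for all t > 0, y(t) ≤ (c₂/c₃)^{1/p} + (c₃(p−1)t)^{−1/(p−1)}. -/
import Mathlib

open Real Set Filter Topology

private lemma myAddRpow {a b p : ℝ} (ha : 0 ≤ a) (hb : 0 ≤ b) (hp : 1 ≤ p) :
    a ^ p + b ^ p ≤ (a + b) ^ p := by
  have h := NNReal.add_rpow_le_rpow_add a.toNNReal b.toNNReal hp
  have h2 := (NNReal.coe_le_coe).2 h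
  push_cast [NNReal.coe_rpow] at h2
  rwa [Real.coe_toNNReal a ha, Real.coe_toNNReal b hb] at h2

private lemma myGrow {v : ℝ → ℝ} {K a b : ℝ} (hab : a ≤ b)
    (hcont : ContinuousOn v (Set.Icc a b))
    (hd : ∀ t ∈ Set.Ioo a b, ∃ v', HasDerivAt v v' t ∧ K ≤ v') :
    v a + K * (b - a) ≤ v b := by
  set g : ℝ → ℝ := fun t => v t - K * t with hg
  have hmono : MonotoneOn g (Set.Icc a b) := by
    apply monotoneOn_of_deriv_nonneg (convex_Icc a b)
    · exact hcont.sub ((continuous_const.mul continuous_id).continuousOn)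
    · intro x hx
      rw [interior_Icc] at hx
      obtain ⟨v', hv, _⟩ := hd x hx
      have : HasDerivAt g (v' - K * 1) x := hv.sub ((hasDerivAt_id x).const_mul K)
      exact this.differentiableAt.differentiableWithinAt
    · intro x hx
      rw [interior_Icc] at hx
      obtain ⟨v', hv, hKv⟩ := hd x hx
      have hgd : HasDerivAt g (v' - K * 1) x := hv.sub ((hasDerivAt_id x).const_mul K)
      rw [hgd.deriv]; linarith
  have h := hmono (Set.left_mem_Icc.2 hab) (Set.right_mem_Icc.2 hab) hab
  simp only [hg] at h
  have : K * (b - a) = K * b - K * a := by ring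
  linarith

theorem stmt3 (c₂ c₃ p : ℝ) (y y' : ℝ → ℝ) (hc₂ : 0 < c₂) (hc₃ : 0 < c₃) (hp : 1 < p)
    (hy0 : ∀ t : ℝ, 0 ≤ t → 0 ≤ y t)
    (hcont : ContinuousOn y (Set.Ici (0 : ℝ)))
    (hderiv : ∀ t : ℝ, 0 < t → HasDerivAt y (y' t) t)
    (hineq : ∀ t : ℝ, 0 < t → y' t + c₃ * y t ^ p ≤ c₂) :
    ∀ t : ℝ, 0 < t →
      y t ≤ (c₂ / c₃) ^ (1 / p) + (c₃ * (p - 1) * t) ^ (-(1 / (p - 1))) := by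
  intro t₀ ht₀
  set B : ℝ := (c₂ / c₃) ^ (1 / p) with hB
  have hp0 : (0:ℝ) < p := lt_trans one_pos hp
  have hK : 0 < c₃ * (p - 1) := mul_pos hc₃ (by linarith)
  set K : ℝ := c₃ * (p - 1) with hKdef
  have h1p : (1:ℝ) - p < 0 := by linarith
  have h1pne : (1:ℝ) - p ≠ 0 := ne_of_lt h1p
  have hB0 : 0 < B := Real.rpow_pos_of_pos (div_pos hc₂ hc₃) _
  have hBp : c₃ * B ^ p = c₂ := by
    rw [hB, ← Real.rpow_mul (div_pos hc₂ hc₃).le, one_div_mul_cancel hp0.ne',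
      Real.rpow_one, mul_div_cancel₀ _ hc₃.ne']
  have hznn : 0 ≤ (c₃ * (p - 1) * t₀) ^ (-(1 / (p - 1))) :=
    Real.rpow_nonneg (by positivity) _
  by_cases hyB : y t₀ ≤ B
  · linarith
  push_neg at hyB
  -- the set of times up to t₀ where y ≤ B, together with 0
  set S : Set ℝ := {s | s ∈ Set.Icc 0 t₀ ∧ y s ≤ B} with hS
  set T : Set ℝ := insert 0 S with hT
  have hTne : T.Nonempty := ⟨0, Set.mem_insert _ _⟩
  have hTsub : T ⊆ Set.Icc 0 t₀ := by
    intro s hs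
    rcases hs with rfl | hs
    · exact ⟨le_refl _, ht₀.le⟩
    · exact hs.1
  have hTbdd : BddAbove T := ⟨t₀, fun s hs => (hTsub hs).2⟩
  set σ : ℝ := sSup T with hσ
  have hσ0 : 0 ≤ σ := le_csSup hTbdd (Set.mem_insert _ _)
  have hσt₀ : σ < t₀ := by
    have hcw : ContinuousWithinAt y (Set.Ici 0) t₀ := hcont t₀ (Set.mem_Ici.2 ht₀.le)
    have hev : ∀ᶠ s in 𝓝[Set.Ici (0:ℝ)] t₀, B < y s := hcw.eventually (eventually_gt_nhds hyB)
    have hev' : {s : ℝ | B < y s} ∈ 𝓝[Set.Ici (0:ℝ)] t₀ := hev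
    rw [Metric.mem_nhdsWithin_iff] at hev'
    obtain ⟨δ, hδ, hδ'⟩ := hev'
    set d : ℝ := min (δ / 2) t₀ with hd
    have hd0 : 0 < d := lt_min (by linarith) ht₀
    have hdt₀ : d ≤ t₀ := min_le_right _ _
    have hbound : ∀ s ∈ T, s ≤ t₀ - d := by
      intro s hs
      rcases hs with rfl | hs
      · linarith
      · by_contra hc
        push_neg at hc
        have h1 : dist s t₀ < δ := by
          rw [Real.dist_eq, abs_of_nonpos (by linarith [hs.1.2])]
          have : d ≤ δ / 2 := min_le_left _ _
          linarith [hs.1.2]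
        have : B < y s := hδ' ⟨Metric.mem_ball.2 h1, hs.1.1⟩
        linarith [hs.2]
    have : σ ≤ t₀ - d := csSup_le hTne hbound
    linarith
  have hygt : ∀ s ∈ Set.Ioc σ t₀, B < y s := by
    intro s hs
    by_contra hc
    push_neg at hc
    have hmem : s ∈ T := Set.mem_insert_of_mem _ ⟨⟨le_trans hσ0 hs.1.le, hs.2⟩, hc⟩
    have := le_csSup hTbdd hmem
    linarith [hs.1]
  have hspos : ∀ s ∈ Set.Ioc σ t₀, (0:ℝ) < s := fun s hs => lt_of_le_of_lt hσ0 hs.1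
  -- the auxiliary function v
  set v : ℝ → ℝ := fun s => (y s - B) ^ (1 - p) with hv
  have hvpos : ∀ s ∈ Set.Ioc σ t₀, 0 < v s := fun s hs =>
    Real.rpow_pos_of_pos (sub_pos.2 (hygt s hs)) _
  -- derivative bound for v on (σ, t₀)
  have hvd : ∀ s ∈ Set.Ioo σ t₀, ∃ v', HasDerivAt v v' s ∧ K ≤ v' := by
    intro s hs
    have hsIoc : s ∈ Set.Ioc σ t₀ := ⟨hs.1, hs.2.le⟩
    have hspos' : (0:ℝ) < s := hspos s hsIoc
    have hu : 0 < y s - B := sub_pos.2 (hygt s hsIoc)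
    have hyd : HasDerivAt (fun r => y r - B) (y' s) s := (hderiv s hspos').sub_const B
    have hvd' : HasDerivAt v (y' s * (1 - p) * (y s - B) ^ (1 - p - 1)) s :=
      hyd.rpow_const (Or.inl hu.ne')
    refine ⟨_, hvd', ?_⟩
    -- bound y' s ≤ -c₃ (y s - B)^p
    have hadd : (y s - B) ^ p + B ^ p ≤ y s ^ p := by
      have := myAddRpow hu.le hB0.le hp.le
      rwa [sub_add_cancel] at this
    have hy' : y' s ≤ -(c₃ * (y s - B) ^ p) := by
      have h1 := hineq s hspos'
      nlinarith [mul_le_mul_of_nonneg_left hadd hc₃.le]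
    have hexp : (1:ℝ) - p - 1 = -p := by ring
    rw [hexp]
    have hupow : 0 < (y s - B) ^ (-p) := Real.rpow_pos_of_pos hu _
    have hkey : (y s - B) ^ (-p) * (y s - B) ^ p = 1 := by
      rw [← Real.rpow_add hu]; simp
    have hc : 0 ≤ (p - 1) * (y s - B) ^ (-p) := mul_nonneg (by linarith) hupow.le
    have hmul := mul_le_mul_of_nonneg_left hy' hc
    have heq : (p - 1) * (y s - B) ^ (-p) * -(c₃ * (y s - B) ^ p)
        = -(c₃ * (p - 1)) * ((y s - B) ^ (-p) * (y s - B) ^ p) := by ring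
    rw [heq, hkey, mul_one] at hmul
    have hgoal : y' s * (1 - p) * (y s - B) ^ (-p)
        = -((p - 1) * (y s - B) ^ (-p) * y' s) := by ring
    rw [hgoal, hKdef]
    linarith
  -- growth estimate
  have hgrow : ∀ a ∈ Set.Ioo σ t₀, v a + K * (t₀ - a) ≤ v t₀ := by
    intro a ha
    apply myGrow ha.2.le
    · apply ContinuousOn.rpow_const
      · apply ContinuousOn.sub _ continuousOn_const
        exact hcont.mono (fun x hx => le_trans (le_trans hσ0 ha.1.le) hx.1)
      · intro x hx
        exact Or.inl (sub_pos.2 (hygt x ⟨lt_of_lt_of_le ha.1 hx.1, hx.2⟩)).ne'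
    · intro s hs
      exact hvd s ⟨lt_trans ha.1 hs.1, hs.2⟩
  -- σ = 0
  have hσzero : σ = 0 := by
    by_contra hc
    have hσpos : 0 < σ := lt_of_le_of_ne hσ0 (Ne.symm hc)
    have hSclosed : IsClosed S := by
      have : S = Set.Icc 0 t₀ ∩ y ⁻¹' Set.Iic B := by
        ext x; simp [hS, Set.mem_Icc, and_assoc]
      rw [this]
      exact ContinuousOn.preimage_isClosed_of_isClosed
        (hcont.mono (fun x hx => hx.1)) isClosed_Icc isClosed_Iic
    have hTclosed : IsClosed T := by
      rw [hT, Set.insert_eq]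
      exact isClosed_singleton.union hSclosed
    have hσT : σ ∈ T := hTclosed.csSup_mem hTne hTbdd
    have hσS : σ ∈ S := by
      rcases hσT with h | h
      · exact absurd h hc
      · exact h
    have hyσ : y σ ≤ B := hσS.2
    -- blow-up of v near σ forces contradiction
    have hvt₀pos : 0 < v t₀ := hvpos t₀ ⟨hσt₀, le_refl _⟩
    set δ : ℝ := (v t₀ + 1) ^ (1 / (1 - p)) with hδdef
    have hδ0 : 0 < δ := Real.rpow_pos_of_pos (by linarith) _
    have hδpow : δ ^ (1 - p) = v t₀ + 1 := by
      rw [hδdef, ← Real.rpow_mul (by linarith : (0:ℝ) ≤ v t₀ + 1),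
        one_div_mul_cancel h1pne, Real.rpow_one]
    have hcwσ : ContinuousWithinAt y (Set.Ici 0) σ := hcont σ (Set.mem_Ici.2 hσ0)
    have htend : Filter.Tendsto y (𝓝[>] σ) (𝓝 (y σ)) :=
      hcwσ.mono_left (nhdsWithin_mono σ (fun x hx => le_trans hσ0 (le_of_lt hx)))
    have hev1 : ∀ᶠ a in 𝓝[>] σ, y a < B + δ :=
      htend.eventually (eventually_lt_nhds (by linarith))
    have hev2 : Set.Ioo σ t₀ ∈ 𝓝[>] σ := Ioo_mem_nhdsGT_of_mem ⟨le_refl _, hσt₀⟩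
    obtain ⟨a, ha1, ha2⟩ := (hev1.and (Filter.eventually_of_mem hev2 (fun x hx => hx))).exists
    have hua : 0 < y a - B := sub_pos.2 (hygt a ⟨ha2.1, ha2.2.le⟩)
    have huaδ : y a - B < δ := by linarith
    have hva : δ ^ (1 - p) < v a := Real.rpow_lt_rpow_of_neg hua huaδ h1p
    have hgrowa := hgrow a ha2
    have : K * (t₀ - a) > 0 := mul_pos hK (by linarith [ha2.2])
    rw [hδpow] at hva
    linarith
  -- conclude K * t₀ ≤ v t₀
  have hKt : K * t₀ ≤ v t₀ := by
    have htendK : Filter.Tendsto (fun a : ℝ => K * (t₀ - a)) (𝓝[>] (0:ℝ)) (𝓝 (K * t₀)) := by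
      have hcK : Continuous (fun a : ℝ => K * (t₀ - a)) :=
        continuous_const.mul (continuous_const.sub continuous_id)
      have h := (hcK.tendsto 0).mono_left (nhdsWithin_le_nhds (s := Set.Ioi (0:ℝ)))
      simpa using h
    apply le_of_tendsto htendK
    have hev : Set.Ioo (0:ℝ) t₀ ∈ 𝓝[>] (0:ℝ) := Ioo_mem_nhdsGT_of_mem ⟨le_refl _, ht₀⟩
    filter_upwards [hev] with a ha
    have ha' : a ∈ Set.Ioo σ t₀ := by rw [hσzero]; exact ha
    have h1 := hgrow a ha'
    have h2 := hvpos a ⟨ha'.1, ha'.2.le⟩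
    linarith
  -- final algebra
  have hM : 0 < K * t₀ := mul_pos hK ht₀
  have hu : 0 < y t₀ - B := sub_pos.2 hyB
  have hzexp : (0:ℝ) ≥ 1 / (1 - p) := by
    apply div_nonpos_of_nonneg_of_nonpos zero_le_one h1p.le
  have hfin : (v t₀) ^ (1 / (1 - p)) ≤ (K * t₀) ^ (1 / (1 - p)) :=
    Real.rpow_le_rpow_of_nonpos hM hKt hzexp
  have hL : (v t₀) ^ (1 / (1 - p)) = y t₀ - B := by
    rw [hv]
    rw [← Real.rpow_mul hu.le, mul_one_div_cancel h1pne, Real.rpow_one]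
  have hR : (K * t₀) ^ (1 / (1 - p)) = (c₃ * (p - 1) * t₀) ^ (-(1 / (p - 1))) := by
    rw [hKdef, show (1:ℝ) - p = -(p - 1) by ring, div_neg]
  rw [hL, hR] at hfin
  linarith
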